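/- Let D ∈ ℝ^{m×m} be symmetric positive definite with largest eigenvalue ψ_max, let L ∈ ℝ^{m×m}, H ∈ ℝ^{p×m}, and R ∈ ℝ^{p×p} symmetric positive definite with largest eigenvalue ρ_max. Let θ_min be the smallest singular value of the stacked matrix (Lᵀ Hᵀ). Then every negative eigenvalue ζ of A₂ = [[D, L], [Lᵀ, −HᵀR^{-1}H]] satisfies ζ ≤ max{ −θ_min²/ρ_max, (1/2)(ψ_max − sqrt(ψ_max² + 4θ_min²)) }. -/

import Mathlib

/-!
Let `(u, v)` be an eigenvector of `A₂` for `ζ < 0`. The first block row gives `Lv = -(D - ζ)u`, so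
with `a = uᵀ(D - ζ)u ≥ 0` one gets `‖Lv‖² ≤ (ψ_max - ζ) a`; with `y = R⁻¹Hv` and
`q = vᵀHᵀR⁻¹Hv = yᵀRy ≥ 0` one gets `‖Hv‖² = ‖Ry‖² ≤ ρ_max q`; and the second block row gives
`a + q = -ζ ‖v‖²`. Hence `θ_min² ‖v‖² ≤ ‖Lv‖² + ‖Hv‖² ≤ -ζ max(ψ_max - ζ, ρ_max) ‖v‖²`, where
`v ≠ 0` because otherwise `Du = ζu`. Solving `θ_min² ≤ -ζ max(ψ_max - ζ, ρ_max)` for `ζ` in the two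
cases of the maximum gives the bound.
-/

open Matrix

namespace Matrix.IsHermitian

variable {n : Type*} [Fintype n] [DecidableEq n] {A : Matrix n n ℝ}

theorem exists_mulVec_eq_eigenvalues_smul (hA : A.IsHermitian) (i : n) :
    ∃ x ≠ 0, A *ᵥ x = hA.eigenvalues i • x :=
  ⟨_, fun h => hA.eigenvectorBasis.orthonormal.ne_zero i (WithLp.ofLp_injective 2 h),
    hA.mulVec_eigenvectorBasis i⟩

open scoped MatrixOrder in
theorem posSemidef_cfc (hA : A.IsHermitian) {f : ℝ → ℝ} (hf : ∀ i, 0 ≤ f (hA.eigenvalues i)) :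
    (cfc f A).PosSemidef := by
  rw [← nonneg_iff_posSemidef]
  refine cfc_nonneg fun t ht => ?_
  obtain ⟨i, rfl⟩ := hA.spectrum_real_eq_range_eigenvalues ▸ ht
  exact hf i

theorem mul_dotProduct_le_dotProduct_mulVec (hA : A.IsHermitian) {s : ℝ}
    (hs : ∀ i, s ≤ hA.eigenvalues i) (x : n → ℝ) : s * (x ⬝ᵥ x) ≤ x ⬝ᵥ A *ᵥ x := by
  have hpsd : (A - s • 1).PosSemidef := by
    have := hA.posSemidef_cfc (f := fun t => t - s) fun i => sub_nonneg.2 (hs i)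
    rwa [cfc_sub _ _ A, cfc_const s A, cfc_id' ℝ A, Algebra.algebraMap_eq_smul_one] at this
  have := hpsd.dotProduct_mulVec_nonneg x
  simp only [star_trivial, sub_mulVec, smul_mulVec, one_mulVec, dotProduct_sub,
    dotProduct_smul, smul_eq_mul] at this
  linarith

theorem iInf_eigenvalues_mul_le (hA : A.IsHermitian) (x : n → ℝ) :
    (⨅ i, hA.eigenvalues i) * (x ⬝ᵥ x) ≤ x ⬝ᵥ A *ᵥ x :=
  hA.mul_dotProduct_le_dotProduct_mulVec (fun i => ciInf_le (Set.finite_range _).bddBelow i) x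

/-- `(c - A)(A - s)` is positive semidefinite, with eigenvalues `(c - λ)(λ - s)`, and its quadratic
form at `x` is `(c - s) x ⬝ w - w ⬝ w` for `w = (A - s) x`. -/
theorem sub_smul_dotProduct_sub_smul_le (hA : A.IsHermitian) {s c : ℝ}
    (hs : ∀ i, s ≤ hA.eigenvalues i) (hc : ∀ i, hA.eigenvalues i ≤ c) (x : n → ℝ) :
    (A *ᵥ x - s • x) ⬝ᵥ (A *ᵥ x - s • x) ≤ (c - s) * (x ⬝ᵥ (A *ᵥ x - s • x)) := by
  have hpsd : ((c • 1 - A) * (A - s • 1)).PosSemidef := by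
    have := hA.posSemidef_cfc (f := fun t => (c - t) * (t - s))
      fun i => mul_nonneg (sub_nonneg.2 (hc i)) (sub_nonneg.2 (hs i))
    rwa [cfc_mul _ _ A, cfc_sub _ _ A, cfc_sub _ _ A, cfc_const c A, cfc_const s A,
      cfc_id' ℝ A, Algebra.algebraMap_eq_smul_one, Algebra.algebraMap_eq_smul_one] at this
  have hAx : x ᵥ* A = A *ᵥ x := by
    rw [← vecMul_transpose, ← conjTranspose_eq_transpose_of_trivial, hA.eq]
  have := hpsd.dotProduct_mulVec_nonneg x
  rw [star_trivial, ← mulVec_mulVec, sub_mulVec, smul_mulVec, one_mulVec, sub_mulVec,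
    smul_mulVec, one_mulVec, dotProduct_sub, dotProduct_smul, dotProduct_mulVec, hAx] at this
  simp only [dotProduct_sub, sub_dotProduct, dotProduct_smul, smul_dotProduct,
    smul_eq_mul] at this ⊢
  linarith [dotProduct_comm x (A *ᵥ x)]

end Matrix.IsHermitian

theorem Matrix.dotProduct_conjTranspose_mul_self_mulVec {m n : Type*} [Fintype m] [Fintype n]
    (A : Matrix m n ℝ) (v : n → ℝ) : v ⬝ᵥ (Aᴴ * A) *ᵥ v = (A *ᵥ v) ⬝ᵥ (A *ᵥ v) := by
  rw [← mulVec_mulVec, dotProduct_mulVec, vecMul_conjTranspose, star_trivial, star_trivial]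

theorem Matrix.PosDef.eq_zero_of_mulVec_eq_smul {n : Type*} [Fintype n] {D : Matrix n n ℝ}
    (hD : D.PosDef) {ζ : ℝ} (hζ : ζ ≤ 0) {u : n → ℝ} (h : D *ᵥ u = ζ • u) : u = 0 := by
  by_contra hu
  have hpos := hD.dotProduct_mulVec_pos hu
  rw [star_trivial, h, dotProduct_smul, smul_eq_mul] at hpos
  have hu' : 0 < u ⬝ᵥ u := by simpa using dotProduct_star_self_pos_iff.2 hu
  nlinarith

theorem Matrix.fromBlocks_mulVec_sum_elim_eq_smul_iff {l m R : Type*} [Fintype l] [Fintype m]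
    [Semiring R] {A : Matrix l l R} {B : Matrix l m R} {C : Matrix m l R} {E : Matrix m m R}
    {u : l → R} {v : m → R} {ζ : R} :
    fromBlocks A B C E *ᵥ Sum.elim u v = ζ • Sum.elim u v ↔
      A *ᵥ u + B *ᵥ v = ζ • u ∧ C *ᵥ u + E *ᵥ v = ζ • v := by
  simp only [fromBlocks_mulVec, Sum.elim_comp_inl, Sum.elim_comp_inr, funext_iff, Sum.forall,
    Sum.elim_inl, Sum.elim_inr, Pi.smul_apply]

theorem Matrix.PosDef.mulVec_dotProduct_mulVec_le {n k : Type*} [Fintype n] [Fintype k]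
    [DecidableEq k] {R : Matrix k k ℝ} (hR : R.PosDef) {ρ : ℝ}
    (hρ : ∀ i, hR.isHermitian.eigenvalues i ≤ ρ) (H : Matrix k n ℝ) (v : n → ℝ) :
    (H *ᵥ v) ⬝ᵥ (H *ᵥ v) ≤ ρ * (v ⬝ᵥ (Hᴴ * R⁻¹ * H) *ᵥ v) := by
  set y := R⁻¹ *ᵥ (H *ᵥ v)
  have hRy : R *ᵥ y = H *ᵥ v := by
    rw [mulVec_mulVec, mul_nonsing_inv _ hR.det_pos.ne'.isUnit, one_mulVec]
  have hform : v ⬝ᵥ (Hᴴ * R⁻¹ * H) *ᵥ v = y ⬝ᵥ R *ᵥ y := by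
    rw [← mulVec_mulVec, ← mulVec_mulVec, dotProduct_mulVec, vecMul_conjTranspose, star_trivial,
      star_trivial]
    change H *ᵥ v ⬝ᵥ y = _
    rw [← hRy, dotProduct_comm]
  have := hR.isHermitian.sub_smul_dotProduct_sub_smul_le (s := 0)
    (fun i => (hR.eigenvalues_pos i).le) hρ y
  rw [hform]
  simpa only [zero_smul, sub_zero, hRy] using this

theorem mulVec_dotProduct_add_le_of_saddlePoint_eigen {n k : Type*} [Fintype n] [Fintype k]
    [DecidableEq n] [DecidableEq k] {D L : Matrix n n ℝ} {H : Matrix k n ℝ} {R : Matrix k k ℝ}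
    (hD : D.PosDef) (hR : R.PosDef) {ψ ρ ζ : ℝ} (hψ : ∀ i, hD.isHermitian.eigenvalues i ≤ ψ)
    (hρ : ∀ i, hR.isHermitian.eigenvalues i ≤ ρ) (hζ : ζ ≤ 0) {u v : n → ℝ}
    (h₁ : D *ᵥ u + L *ᵥ v = ζ • u) (h₂ : Lᴴ *ᵥ u + -(Hᴴ * R⁻¹ * H) *ᵥ v = ζ • v) :
    (L *ᵥ v) ⬝ᵥ (L *ᵥ v) + (H *ᵥ v) ⬝ᵥ (H *ᵥ v) ≤ -ζ * max (ψ - ζ) ρ * (v ⬝ᵥ v) := by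
  set a := u ⬝ᵥ (D *ᵥ u - ζ • u)
  set q := v ⬝ᵥ (Hᴴ * R⁻¹ * H) *ᵥ v
  have hLv : L *ᵥ v = -(D *ᵥ u - ζ • u) := by rw [neg_sub, ← h₁, add_sub_cancel_left]
  have hL : (L *ᵥ v) ⬝ᵥ (L *ᵥ v) ≤ (ψ - ζ) * a := by
    rw [hLv, neg_dotProduct_neg]
    exact hD.isHermitian.sub_smul_dotProduct_sub_smul_le
      (fun i => hζ.trans (hD.eigenvalues_pos i).le) hψ u
  have ha : 0 ≤ a := by
    have := hD.isHermitian.mul_dotProduct_le_dotProduct_mulVec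
      (fun i => hζ.trans (hD.eigenvalues_pos i).le) u
    simp only [a, dotProduct_sub, dotProduct_smul, smul_eq_mul]
    linarith
  have hq : 0 ≤ q := by
    simpa only [star_trivial] using
      (hR.inv.posSemidef.conjTranspose_mul_mul_same H).dotProduct_mulVec_nonneg v
  have hsum : a + q = -ζ * (v ⬝ᵥ v) := by
    have hLu : v ⬝ᵥ Lᴴ *ᵥ u = -a := by
      rw [dotProduct_mulVec, vecMul_conjTranspose, star_trivial, star_trivial, dotProduct_comm,
        hLv, dotProduct_neg]
    have := congrArg (v ⬝ᵥ ·) h₂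
    simp only [dotProduct_add, neg_mulVec, dotProduct_neg, dotProduct_smul, smul_eq_mul,
      hLu] at this
    linarith
  calc (L *ᵥ v) ⬝ᵥ (L *ᵥ v) + (H *ᵥ v) ⬝ᵥ (H *ᵥ v) ≤ (ψ - ζ) * a + ρ * q :=
        add_le_add hL (hR.mulVec_dotProduct_mulVec_le hρ H v)
    _ ≤ max (ψ - ζ) ρ * a + max (ψ - ζ) ρ * q := by
        gcongr
        exacts [le_max_left _ _, le_max_right _ _]
    _ = -ζ * max (ψ - ζ) ρ * (v ⬝ᵥ v) := by rw [← mul_add, hsum]; ring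

theorem le_max_of_le_neg_mul_max {ζ ψ ρ t : ℝ} (hζ : ζ ≤ 0) (hψ : 0 ≤ ψ)
    (h : t ≤ -ζ * max (ψ - ζ) ρ) :
    ζ ≤ max (-(t / ρ)) ((ψ - √(ψ ^ 2 + 4 * t)) / 2) := by
  rcases le_or_gt ρ (ψ - ζ) with hρ | hρ
  · rw [max_eq_left hρ] at h
    have hsqrt : √(ψ ^ 2 + 4 * t) ≤ ψ - 2 * ζ :=
      Real.sqrt_le_iff.2 ⟨by linarith, by nlinarith⟩
    exact le_max_of_le_right (by linarith)
  · rw [max_eq_right hρ.le] at h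
    have hρ0 : 0 < ρ := by linarith
    refine le_max_of_le_left ?_
    rw [le_neg, div_le_iff₀ hρ0]
    linarith

/-- Upper bound for the negative eigenvalues of `A₂ = [[D, L], [Lᵀ, −HᵀR⁻¹H]]`: with `D` SPD
(largest eigenvalue `ψ_max`), `R` SPD (largest eigenvalue `ρ_max`) and `θ_min` the smallest
singular value of the stacked matrix `(Lᵀ Hᵀ)`, every negative eigenvalue `ζ` satisfies
`ζ ≤ max { −θ_min²/ρ_max, (ψ_max − sqrt(ψ_max² + 4θ_min²))/2 }`. -/
theorem A2_neg_eig_upper_bound {m p : ℕ}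
    (D L : Matrix (Fin m) (Fin m) ℝ) (H : Matrix (Fin p) (Fin m) ℝ)
    (R : Matrix (Fin p) (Fin p) ℝ) (hD : D.PosDef) (hR : R.PosDef)
    (hA2 : (Matrix.fromBlocks D L Lᴴ (-(Hᴴ * R⁻¹ * H))).IsHermitian)
    (ψmax ρmax θmin : ℝ)
    (hψmax : ψmax = ⨆ i, hD.isHermitian.eigenvalues i)
    (hρmax : ρmax = ⨆ i, hR.isHermitian.eigenvalues i)
    (hθmin : θmin = Real.sqrt (⨅ i, ((isHermitian_conjTranspose_mul_self L).add
        (isHermitian_conjTranspose_mul_self H)).eigenvalues i)) :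
    ∀ i, hA2.eigenvalues i < 0 →
      hA2.eigenvalues i ≤
        max (-(θmin ^ 2 / ρmax)) ((ψmax - Real.sqrt (ψmax ^ 2 + 4 * θmin ^ 2)) / 2) := by
  intro i hζ
  subst hψmax hρmax
  obtain ⟨x, hx0, hx⟩ := hA2.exists_mulVec_eq_eigenvalues_smul i
  rw [← Sum.elim_comp_inl_inr x, fromBlocks_mulVec_sum_elim_eq_smul_iff] at hx
  obtain ⟨h₁, h₂⟩ := hx
  have hv : x ∘ Sum.inr ≠ 0 := by
    intro hv
    rw [hv, mulVec_zero, add_zero] at h₁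
    exact hx0 (by rw [← Sum.elim_comp_inl_inr x, hv, hD.eq_zero_of_mulVec_eq_smul hζ.le h₁,
      Sum.elim_zero_zero])
  set S := (isHermitian_conjTranspose_mul_self L).add (isHermitian_conjTranspose_mul_self H)
  have hS : (Lᴴ * L + Hᴴ * H).PosSemidef :=
    (posSemidef_conjTranspose_mul_self L).add (posSemidef_conjTranspose_mul_self H)
  have hθ : θmin ^ 2 = ⨅ j, S.eigenvalues j :=
    hθmin ▸ Real.sq_sqrt (Real.iInf_nonneg hS.eigenvalues_nonneg)
  have hθv := S.iInf_eigenvalues_mul_le (x ∘ Sum.inr)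
  rw [add_mulVec, dotProduct_add, dotProduct_conjTranspose_mul_self_mulVec,
    dotProduct_conjTranspose_mul_self_mulVec, ← hθ] at hθv
  have hbound := mulVec_dotProduct_add_le_of_saddlePoint_eigen hD hR
    (fun j => le_ciSup (Set.finite_range _).bddAbove j)
    (fun j => le_ciSup (Set.finite_range _).bddAbove j) hζ.le h₁ h₂
  refine le_max_of_le_neg_mul_max hζ.le
    (Real.iSup_nonneg fun j => (hD.eigenvalues_pos j).le) ?_
  exact le_of_mul_le_mul_right (hθv.trans hbound)
    (by simpa using dotProduct_star_self_pos_iff.2 hv)
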